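/- Let q be odd, C(X) ≠ X a monic irreducible polynomial of degree n over F_q with root γ ∈ F_{q^n}, and define the sequence C_0 = C and C_{i+1}(X^2) = (-1)^n C_i(X) C_i(-X), valid as long as C_i has a nonzero odd coefficient. Then for each i in the range of validity, γ^{2^i} is a root of C_i, i.e., C_i is the minimal polynomial of γ^{2^i} over F_q. -/

import Mathlib

open Polynomial

private lemma coeff_comp_neg_X {F : Type*} [CommRing F] (p : F[X]) (j : ℕ) :
    (p.comp (-X)).coeff j = (-1) ^ j * p.coeff j := by
  induction p using Polynomial.induction_on' with
  | add p q hp hq => simp [add_comp, hp, hq, mul_add]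
  | monomial k a =>
    have hC : ((-1 : F[X])) ^ k = C ((-1:F) ^ k) := by rw [map_pow, map_neg, C_1]
    have key : (C a) * (-X : F[X])^k = C (a * (-1)^k) * X^k := by
      rw [neg_pow, hC, map_mul]; ring
    rw [monomial_comp, key, coeff_C_mul, coeff_X_pow, coeff_monomial]
    clear hC key
    split_ifs with h1 h2 h3
    · subst h1; ring
    · exact absurd h1.symm h2
    · exact absurd h3.symm h1
    · ring

theorem stmt_15 (F E : Type*) [Field F] [Fintype F] [Field E] [Fintype E] [Algebra F E]
    (hq : Odd (Fintype.card F)) (n : ℕ) (hn : 1 ≤ n) (hrank : Module.finrank F E = n)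
    (γ : E) (Cs : ℕ → F[X]) (m : ℕ)
    (h0 : Cs 0 = minpoly F γ) (hX : Cs 0 ≠ X)
    (hm0 : (Cs 0).Monic) (hirr0 : Irreducible (Cs 0)) (hdeg0 : (Cs 0).natDegree = n)
    (hodd : ∀ i < m, ∃ j, Odd j ∧ (Cs i).coeff j ≠ 0)
    (hrec : ∀ i < m,
      (Cs (i + 1)).comp (X ^ 2) = (-1 : F[X]) ^ n * (Cs i * (Cs i).comp (-X))) :
    ∀ i ≤ m, Polynomial.aeval (γ ^ 2 ^ i) (Cs i) = 0 ∧ Cs i = minpoly F (γ ^ 2 ^ i) := by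
  have hFD : Module.Finite F E := Module.Finite.of_finite
  have hq1 : 1 < Fintype.card F := Fintype.one_lt_card
  -- characteristic not 2
  have h2F : (2 : F) ≠ 0 := by
    intro h
    have hchar : ringChar F = 2 :=
      ((Nat.dvd_prime Nat.prime_two).mp (ringChar.dvd (by exact_mod_cast h))).resolve_left
        CharP.ringChar_ne_one
    have h1 := FiniteField.even_card_iff_char_two.mp hchar
    have h2 := Nat.odd_iff.mp hq
    omega
  have hγ : γ ≠ 0 := by
    intro h
    apply hX
    rw [h0, h, minpoly.zero]
  have hcardE : Fintype.card E = Fintype.card F ^ n := by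
    rw [Module.card_eq_pow_finrank (K := F) (V := E), hrank]
  suffices H : ∀ i ≤ m, Cs i = minpoly F (γ ^ 2 ^ i) ∧ (Cs i).natDegree = n by
    intro i hi
    obtain ⟨h1, _⟩ := H i hi
    exact ⟨by rw [h1]; exact minpoly.aeval F _, h1⟩
  intro i
  induction i with
  | zero =>
    intro _
    rw [pow_zero, pow_one]
    exact ⟨h0, hdeg0⟩
  | succ i ih =>
    intro hi1
    have hi : i < m := hi1
    obtain ⟨hmin, hdeg⟩ := ih hi.le
    set β := γ ^ 2 ^ i with hβdef
    have hβ0 : β ≠ 0 := pow_ne_zero _ hγ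
    have hint : IsIntegral F β := IsIntegral.of_finite F β
    have hCmonic : (Cs i).Monic := hmin ▸ minpoly.monic hint
    have hC0 : Cs i ≠ 0 := hCmonic.ne_zero
    have haevalβ : aeval β (Cs i) = 0 := by rw [hmin]; exact minpoly.aeval F β
    -- properties of (Cs i).comp (-X)
    have hdnegX : ((Cs i).comp (-X)).natDegree = n := by
      rw [natDegree_comp]
      simp [hdeg]
    have hlcnegX : ((Cs i).comp (-X)).leadingCoeff = (-1) ^ n := by
      rw [leadingCoeff_comp (by simp : (-X : F[X]).natDegree ≠ 0)]
      simp [hCmonic.leadingCoeff, hdeg]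
    have hnegX0 : (Cs i).comp (-X) ≠ 0 := by
      intro h
      rw [h, leadingCoeff_zero] at hlcnegX
      exact (by simp : ((-1 : F) ^ n) ≠ 0) hlcnegX.symm
    -- the RHS of the recursion
    have hCneg : ((-1 : F[X])) ^ n = C ((-1 : F) ^ n) := by rw [map_pow, map_neg, C_1]
    have hRHSlc : ((-1 : F[X]) ^ n * (Cs i * (Cs i).comp (-X))).leadingCoeff = 1 := by
      rw [hCneg, leadingCoeff_mul, leadingCoeff_mul, leadingCoeff_C, hCmonic.leadingCoeff,
        hlcnegX, one_mul, ← mul_pow]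
      norm_num
    have hRHSdeg : ((-1 : F[X]) ^ n * (Cs i * (Cs i).comp (-X))).natDegree = 2 * n := by
      rw [hCneg, natDegree_C_mul (by simp : ((-1 : F) ^ n) ≠ 0), natDegree_mul hC0 hnegX0,
        hdeg, hdnegX]
      ring
    have hrec' := hrec i hi
    set D := Cs (i + 1) with hDdef
    have hD0 : D ≠ 0 := by
      intro h
      rw [h, zero_comp] at hrec'
      have := hRHSlc
      rw [← hrec', leadingCoeff_zero] at this
      exact one_ne_zero this.symm
    have hDdeg : D.natDegree = n := by
      have := congrArg natDegree hrec'
      rw [natDegree_comp, natDegree_X_pow, hRHSdeg] at this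
      omega
    have hDmonic : D.Monic := by
      have := congrArg leadingCoeff hrec'
      rw [leadingCoeff_comp (by simp : ((X : F[X]) ^ 2).natDegree ≠ 0), hRHSlc,
        leadingCoeff_X_pow, one_pow, mul_one] at this
      exact this
    have haevalD : aeval (β ^ 2) D = 0 := by
      have := congrArg (aeval β) hrec'
      rw [aeval_comp, map_pow, aeval_X, map_mul, map_mul, haevalβ] at this
      simpa using this
    have hint2 : IsIntegral F (β ^ 2) := IsIntegral.of_finite F _
    have hdvd : minpoly F (β ^ 2) ∣ D := minpoly.dvd F _ haevalD
    -- the key degree claim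
    have hkey : (minpoly F (β ^ 2)).natDegree = n := by
      set d := (minpoly F (β ^ 2)).natDegree with hd
      have hd_le : d ≤ n := hDdeg ▸ natDegree_le_of_dvd hdvd hD0
      by_contra hne
      have hdlt : d < n := lt_of_le_of_ne hd_le hne
      have hd1 : 0 < d := minpoly.natDegree_pos hint2
      haveI : Fintype (IntermediateField.adjoin F {β ^ 2} : IntermediateField F E) :=
        Fintype.ofFinite _
      have hfinrankK : Module.finrank F (IntermediateField.adjoin F {β ^ 2} : IntermediateField F E) = d :=
        IntermediateField.adjoin.finrank hint2
      set t := Fintype.card F ^ d with ht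
      have hcardK : Fintype.card (IntermediateField.adjoin F {β ^ 2} : IntermediateField F E) = t := by
        rw [Module.card_eq_pow_finrank (K := F), hfinrankK]
      have hβ2t : (β ^ 2) ^ t = β ^ 2 := by
        have hmem : β ^ 2 ∈ IntermediateField.adjoin F {β ^ 2} :=
          IntermediateField.mem_adjoin_simple_self F (β ^ 2)
        have hpc := FiniteField.pow_card
          (⟨β ^ 2, hmem⟩ : (IntermediateField.adjoin F {β ^ 2} : IntermediateField F E))
        rw [hcardK] at hpc
        have := congrArg (Subtype.val) hpc
        simpa using this
      -- the iterated Frobenius as an F-algebra endomorphism of E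
      obtain ⟨p, hpchar⟩ := CharP.exists F
      obtain ⟨s, hps, hcardF⟩ := FiniteField.card F p
      haveI : Fact p.Prime := ⟨hps⟩
      haveI : CharP E p := charP_of_injective_algebraMap (algebraMap F E).injective p
      have htp : t = p ^ (s * d : ℕ) := by rw [ht, hcardF, ← pow_mul]
      let σ : E →ₐ[F] E :=
        { toRingHom := iterateFrobenius E p (s * d)
          commutes' := fun a => by
            show iterateFrobenius E p (s * d) (algebraMap F E a) = algebraMap F E a
            rw [iterateFrobenius_def, ← map_pow, ← htp, ht, FiniteField.pow_card_pow] }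
      have hσ : ∀ x : E, σ x = x ^ t := fun x => by
        show iterateFrobenius E p (s * d) x = x ^ t
        rw [iterateFrobenius_def, htp]
      have hsq2 : (β ^ t) ^ 2 = β ^ 2 := by
        rw [← pow_mul, mul_comm, pow_mul, hβ2t]
      have hfac : (β ^ t - β) * (β ^ t + β) = 0 := by linear_combination hsq2
      rcases mul_eq_zero.mp hfac with hcase | hcase
      · -- β^t = β : impossible since d < n
        have hβt : β ^ t = β := sub_eq_zero.mp hcase
        have hβtop : (IntermediateField.adjoin F {β} : IntermediateField F E) = ⊤ :=
          (Field.primitive_element_iff_minpoly_natDegree_eq F β).mpr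
            (by rw [← hmin, hdeg, hrank])
        have hadj : Algebra.adjoin F {β} = ⊤ := by
          have h1 := IntermediateField.adjoin_simple_toSubalgebra_of_isAlgebraic hint.isAlgebraic
          rw [hβtop] at h1
          rw [← h1, IntermediateField.top_toSubalgebra]
        have hall : ∀ x : E, x ^ t = x := by
          intro x
          have hle : Algebra.adjoin F {β} ≤ AlgHom.equalizer σ (AlgHom.id F E) :=
            Algebra.adjoin_le (by
              intro y hy
              rw [Set.mem_singleton_iff] at hy
              subst hy
              show σ β = β
              rw [hσ, hβt])
          have hx : x ∈ AlgHom.equalizer σ (AlgHom.id F E) := hle (hadj ▸ Algebra.mem_top)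
          have hx' : σ x = x := hx
          rwa [hσ] at hx'
        have ht2 : 2 ≤ t := le_trans hq1 (Nat.le_self_pow (by omega) _)
        have hu1 : ∀ u : Eˣ, u ^ (t - 1) = 1 := by
          intro u
          have hut : u ^ t = u := Units.ext (by rw [Units.val_pow_eq_pow_val]; exact hall u)
          have hmul : u ^ (t - 1) * u = 1 * u := by
            rw [← pow_succ, Nat.sub_add_cancel (by omega : 1 ≤ t), hut, one_mul]
          exact mul_right_cancel hmul
        have hdvd1 : Fintype.card E - 1 ∣ t - 1 :=
          (FiniteField.forall_pow_eq_one_iff (K := E) (t - 1)).mp hu1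
        have hlt : t < Fintype.card E := by
          rw [hcardE, ht]
          exact Nat.pow_lt_pow_right hq1 hdlt
        have hle' : Fintype.card E - 1 ≤ t - 1 := Nat.le_of_dvd (by omega) hdvd1
        omega
      · -- β^t = -β : contradicts the odd-coefficient hypothesis
        have hβt : β ^ t = -β := eq_neg_of_add_eq_zero_left hcase
        have hσβ : σ β = -β := by rw [hσ, hβt]
        have haeval_neg : aeval (-β) (Cs i) = 0 := by
          have h := aeval_algHom_apply σ β (Cs i)
          rw [haevalβ, map_zero, hσβ] at h
          exact h
        have haevalC' : aeval β (C ((-1 : F) ^ n) * (Cs i).comp (-X)) = 0 := by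
          rw [map_mul, aeval_comp]
          simp [haeval_neg]
        have hdvdC' : Cs i ∣ C ((-1 : F) ^ n) * (Cs i).comp (-X) := by
          have hdd := minpoly.dvd F β haevalC'
          rwa [← hmin] at hdd
        have hC'monic : (C ((-1 : F) ^ n) * (Cs i).comp (-X)).Monic := by
          rw [Monic, leadingCoeff_mul, leadingCoeff_C, hlcnegX, ← mul_pow]
          norm_num
        have hC'deg : (C ((-1 : F) ^ n) * (Cs i).comp (-X)).natDegree = n := by
          rw [natDegree_C_mul (by simp : ((-1 : F) ^ n) ≠ 0), hdnegX]
        have hEq : C ((-1 : F) ^ n) * (Cs i).comp (-X) = Cs i :=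
          eq_of_monic_of_dvd_of_natDegree_le hCmonic hC'monic hdvdC' (by rw [hC'deg, hdeg])
        have hcoeff : ∀ j, (Cs i).coeff j = (-1 : F) ^ n * ((-1) ^ j * (Cs i).coeff j) := by
          intro j
          conv_lhs => rw [← hEq]
          rw [coeff_C_mul, coeff_comp_neg_X]
        obtain ⟨j, hjodd, hjne⟩ := hodd i hi
        have hnodd : Odd n := by
          by_contra hneven
          have heq := hcoeff j
          rw [(Nat.not_odd_iff_even.mp hneven).neg_one_pow, hjodd.neg_one_pow, one_mul] at heq
          apply hjne
          have h2c : (2 : F) * (Cs i).coeff j = 0 := by linear_combination heq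
          rcases mul_eq_zero.mp h2c with h | h
          · exact absurd h h2F
          · exact h
        have hc0 : (Cs i).coeff 0 = 0 := by
          have heq := hcoeff 0
          rw [hnodd.neg_one_pow, pow_zero, one_mul] at heq
          have h2c : (2 : F) * (Cs i).coeff 0 = 0 := by linear_combination heq
          rcases mul_eq_zero.mp h2c with h | h
          · exact absurd h h2F
          · exact h
        have hirr : Irreducible (Cs i) := hmin ▸ minpoly.irreducible hint
        obtain ⟨v, hv⟩ := X_dvd_iff.mpr hc0
        rcases hirr.isUnit_or_isUnit hv with hu | hu
        · exact Polynomial.not_isUnit_X hu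
        · obtain ⟨c, hcu, hcv⟩ := Polynomial.isUnit_iff.mp hu
          apply hβ0
          have h' := haevalβ
          rw [hv, ← hcv, map_mul, aeval_X, aeval_C] at h'
          rcases mul_eq_zero.mp h' with h | h
          · exact h
          · exact absurd h
              ((map_ne_zero_iff _ (algebraMap F E).injective).mpr hcu.ne_zero)
    have hfin : D = minpoly F (β ^ 2) :=
      eq_of_monic_of_dvd_of_natDegree_le (minpoly.monic hint2) hDmonic hdvd
        (by rw [hDdeg, hkey])
    have hpowsucc : γ ^ 2 ^ (i + 1) = β ^ 2 := by
      rw [hβdef, ← pow_mul, pow_succ]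
    rw [hpowsucc]
    exact ⟨hfin, by rw [hDdeg]⟩
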